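/- Let D ≥ 1 be an integer and let ξ : ℝ^D → ℝ be continuous with ξ(0) = 0, and assume the monotone conjugate ξ* is differentiable on ℝ^D. Let χ : ℝ_+^D → ℝ be Lipschitz, let t > 0, and let x, y ∈ ℝ_+^D satisfy χ(y) − S_tχ(x) − (tξ)*(y−x) = 0 (i.e. y attains the supremum defining S_tχ(x)). Then: (i) if x ∈ (0,∞)^D and S_tχ is differentiable at x, then ∇S_tχ(x) = ∇(tξ)*(y−x); (ii) if y ∈ (0,∞)^D and χ is differentiable at y, then ∇χ(y) = ∇(tξ)*(y−x); (iii) if both conditions hold, then ∇S_tχ(x) = ∇χ(y). -/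

import Mathlib

open MeasureTheory
open scoped NNReal

/-- The nonnegative orthant `ℝ_+^D` in `ℝ^D`. -/
def orthant (D : ℕ) : Set (EuclideanSpace ℝ (Fin D)) := {x | ∀ i, 0 ≤ x i}

/-- The monotone conjugate `ξ*(y) = sup_{z ∈ ℝ_+^D} (z·y − ξ(z))`, valued in `ℝ ∪ {+∞}`
(formalized as `EReal`). -/
noncomputable def monotoneConj (D : ℕ) (ξ : EuclideanSpace ℝ (Fin D) → ℝ)
    (y : EuclideanSpace ℝ (Fin D)) : EReal :=
  ⨆ z : orthant D, (((inner ℝ z.1 y : ℝ) - ξ z.1 : ℝ) : EReal)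

/-!
An optimal pair `(x, y)` makes `x' ↦ S x' + c (y - x')` minimal at `x` and `y' ↦ χ y' - c (y' - x)`
maximal at `y`, where `c = (tξ)*`. At an interior point the first-order conditions of these two
extremal problems are exactly (i) and (ii), and (iii) follows by combining them.
-/

open Filter Topology

lemma orthant_mem_nhds {D : ℕ} {x : EuclideanSpace ℝ (Fin D)} (hx : ∀ i, 0 < x i) :
    orthant D ∈ 𝓝 x := by
  have hopen : IsOpen {z : EuclideanSpace ℝ (Fin D) | ∀ i, 0 < z i} := by
    simp only [Set.ofPred_forall]
    exact isOpen_iInter_of_finite fun i =>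
      isOpen_lt continuous_const (EuclideanSpace.proj i).continuous
  exact mem_of_superset (hopen.mem_nhds hx) fun z hz i => (hz i).le

lemma sub_le_of_coe_eq_iSup_coe_sub {α : Type*} {s : ℝ} {a b : α → ℝ}
    (h : (s : EReal) = ⨆ i, (a i : EReal) - (b i : EReal)) (i : α) : a i - b i ≤ s := by
  have hi := le_iSup (fun i => (a i : EReal) - (b i : EReal)) i
  rw [← h, ← EReal.coe_sub] at hi
  exact_mod_cast hi

section Gradient

variable {E : Type*} [NormedAddCommGroup E] [InnerProductSpace ℝ E] [CompleteSpace E]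

lemma gradient_eq_of_isLocalMin_sub {f g : E → ℝ} {a : E} (hf : DifferentiableAt ℝ f a)
    (hg : DifferentiableAt ℝ g a) (hmin : IsLocalMin (fun z => f z - g z) a) :
    gradient f a = gradient g a := by
  have hzero := hmin.fderiv_eq_zero
  rw [fderiv_fun_sub hf hg, sub_eq_zero] at hzero
  rw [gradient, hzero, gradient]

lemma gradient_const_sub_comp_const_sub {c : E → ℝ} {x y : E} (r : ℝ)
    (hc : DifferentiableAt ℝ c (y - x)) :
    gradient (fun x' => r - c (y - x')) x = gradient c (y - x) := by
  have hcomp : HasFDerivAt (fun x' => c (y - x')) _ x :=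
    hc.hasFDerivAt.comp x ((hasFDerivAt_id x).const_sub y)
  rw [gradient, fderiv_const_sub, hcomp.fderiv, gradient]
  congr 1
  ext v
  simp

lemma gradient_comp_sub {c : E → ℝ} (x y : E) :
    gradient (fun y' => c (y' - x)) y = gradient c (y - x) := by
  rw [gradient, fderiv_comp_sub, gradient]

lemma gradient_eq_of_le_of_eq_at_base {s : Set E} {S χ c : E → ℝ} {x y : E} (hs : s ∈ 𝓝 x)
    (hle : ∀ x' ∈ s, χ y - c (y - x') ≤ S x') (heq : χ y - c (y - x) = S x)
    (hS : DifferentiableAt ℝ S x) (hc : DifferentiableAt ℝ c (y - x)) :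
    gradient S x = gradient c (y - x) := by
  have hmin : IsLocalMin (fun x' => S x' - (χ y - c (y - x'))) x := by
    filter_upwards [hs] with x' hx'
    linarith [hle x' hx']
  have hdiff : DifferentiableAt ℝ (fun x' => χ y - c (y - x')) x :=
    (hc.comp x (differentiableAt_id.const_sub y)).const_sub _
  rw [gradient_eq_of_isLocalMin_sub hS hdiff hmin, gradient_const_sub_comp_const_sub _ hc]

lemma gradient_eq_of_le_of_eq_at_optimizer {s : Set E} {S χ c : E → ℝ} {x y : E} (hs : s ∈ 𝓝 y)
    (hle : ∀ y' ∈ s, χ y' - c (y' - x) ≤ S x) (heq : χ y - c (y - x) = S x)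
    (hχ : DifferentiableAt ℝ χ y) (hc : DifferentiableAt ℝ c (y - x)) :
    gradient χ y = gradient c (y - x) := by
  have hmin : IsLocalMin (fun y' => c (y' - x) - χ y') y := by
    filter_upwards [hs] with y' hy'
    linarith [hle y' hy']
  have hdiff : DifferentiableAt ℝ (fun y' => c (y' - x)) y :=
    (differentiableAt_comp_sub x).mpr hc
  rw [← gradient_eq_of_isLocalMin_sub hdiff hχ hmin, gradient_comp_sub]

end Gradient

theorem gradient_hopfLax_optimizer_general (D : ℕ)
    (xstar : EuclideanSpace ℝ (Fin D) → ℝ)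
    (hxdiff : Differentiable ℝ xstar)
    (χ : EuclideanSpace ℝ (Fin D) → ℝ)
    (t : ℝ)
    (S : EuclideanSpace ℝ (Fin D) → ℝ)
    (hS : ∀ x ∈ orthant D, (S x : EReal) =
      ⨆ y : orthant D, ((χ y.1 : EReal) - ((t * xstar (t⁻¹ • (y.1 - x)) : ℝ) : EReal)))
    (x y : EuclideanSpace ℝ (Fin D)) (hx : x ∈ orthant D) (hy : y ∈ orthant D)
    (hopt : χ y - S x - t * xstar (t⁻¹ • (y - x)) = 0) :
    ((∀ i, 0 < x i) → DifferentiableAt ℝ S x →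
      gradient S x = gradient (fun w => t * xstar (t⁻¹ • w)) (y - x)) ∧
    ((∀ i, 0 < y i) → DifferentiableAt ℝ χ y →
      gradient χ y = gradient (fun w => t * xstar (t⁻¹ • w)) (y - x)) ∧
    ((∀ i, 0 < x i) → DifferentiableAt ℝ S x → (∀ i, 0 < y i) → DifferentiableAt ℝ χ y →
      gradient S x = gradient χ y) := by
  set c : EuclideanSpace ℝ (Fin D) → ℝ := fun w => t * xstar (t⁻¹ • w)
  have hc : Differentiable ℝ c := by fun_prop
  have hle : ∀ x' ∈ orthant D, ∀ y' ∈ orthant D, χ y' - c (y' - x') ≤ S x' :=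
    fun x' hx' y' hy' => sub_le_of_coe_eq_iSup_coe_sub (hS x' hx') ⟨y', hy'⟩
  have heq : χ y - c (y - x) = S x := by linarith
  have base (hxpos : ∀ i, 0 < x i) (hSx : DifferentiableAt ℝ S x) :
      gradient S x = gradient c (y - x) :=
    gradient_eq_of_le_of_eq_at_base (orthant_mem_nhds hxpos) (fun x' hx' => hle x' hx' y hy) heq
      hSx (hc _)
  have optimizer (hypos : ∀ i, 0 < y i) (hχy : DifferentiableAt ℝ χ y) :
      gradient χ y = gradient c (y - x) :=
    gradient_eq_of_le_of_eq_at_optimizer (orthant_mem_nhds hypos) (hle x hx) heq hχy (hc _)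
  exact ⟨base, optimizer, fun hxpos hSx hypos hχy =>
    (base hxpos hSx).trans (optimizer hypos hχy).symm⟩

/-- suppose `ξ` is continuous with `ξ(0) = 0` and its monotone conjugate is
real-valued, given by the differentiable function `xstar`, so that
`(tξ)*(w) = t·xstar(w/t)` for `t > 0`.  Let `χ` be Lipschitz on `ℝ_+^D`, and let `S` be the
real-valued function representing the Hopf–Lax value `S_tχ` on `ℝ_+^D`.  If
`x, y ∈ ℝ_+^D` satisfy `χ(y) − S_tχ(x) − (tξ)*(y−x) = 0`, then:
(i) if `x ∈ (0,∞)^D` and `S_tχ` is differentiable at `x`, then `∇S_tχ(x) = ∇(tξ)*(y−x)`;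
(ii) if `y ∈ (0,∞)^D` and `χ` is differentiable at `y`, then `∇χ(y) = ∇(tξ)*(y−x)`;
(iii) if both hold, then `∇S_tχ(x) = ∇χ(y)`. -/
theorem gradient_hopfLax_optimizer (D : ℕ) (hD : 1 ≤ D)
    (ξ : EuclideanSpace ℝ (Fin D) → ℝ) (hξcont : Continuous ξ) (hξ0 : ξ 0 = 0)
    (xstar : EuclideanSpace ℝ (Fin D) → ℝ)
    (hxstar : ∀ y, monotoneConj D ξ y = (xstar y : EReal))
    (hxdiff : Differentiable ℝ xstar)
    (χ : EuclideanSpace ℝ (Fin D) → ℝ) (K : ℝ≥0)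
    (hχlip : LipschitzOnWith K χ (orthant D))
    (t : ℝ) (ht : 0 < t)
    (S : EuclideanSpace ℝ (Fin D) → ℝ)
    (hS : ∀ x ∈ orthant D, (S x : EReal) =
      ⨆ y : orthant D, ((χ y.1 : EReal) - ((t * xstar (t⁻¹ • (y.1 - x)) : ℝ) : EReal)))
    (x y : EuclideanSpace ℝ (Fin D)) (hx : x ∈ orthant D) (hy : y ∈ orthant D)
    (hopt : χ y - S x - t * xstar (t⁻¹ • (y - x)) = 0) :
    ((∀ i, 0 < x i) → DifferentiableAt ℝ S x →
      gradient S x = gradient (fun w => t * xstar (t⁻¹ • w)) (y - x)) ∧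
    ((∀ i, 0 < y i) → DifferentiableAt ℝ χ y →
      gradient χ y = gradient (fun w => t * xstar (t⁻¹ • w)) (y - x)) ∧
    ((∀ i, 0 < x i) → DifferentiableAt ℝ S x → (∀ i, 0 < y i) → DifferentiableAt ℝ χ y →
      gradient S x = gradient χ y) :=
  gradient_hopfLax_optimizer_general D xstar hxdiff χ t S hS x y hx hy hopt
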